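/- arXiv:2002.05592 — 2 statements merged into one kernel-verified Lean document; each statement's English description precedes it below -/
import Mathlib

section
/- Let 𝒳 be a finite set of cardinality k > 1, d > 1 finite, and ℰ the class of exchangeable probability measures on 𝒳^d. If P is a probability measure on 𝒳^d with λ_ℰ(P) > 0, then there is exactly one exchangeable probability measure Q achieving the exchangeable weight (i.e., satisfying P ≥ λ_ℰ(P)·Q), and it is given by Q(x) = min_{y ∈ [x]} P(y) / λ_ℰ(P) for each x ∈ 𝒳^d. -/
open scoped BigOperators Classical

/-- A function `P : Ω → ℝ` on a finite sample space is a probability measure if it is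
nonnegative and sums to one. -/
def IsProb {Ω : Type*} [Fintype Ω] (P : Ω → ℝ) : Prop :=
  (∀ ω, 0 ≤ P ω) ∧ ∑ ω, P ω = 1

/-- A probability measure on `𝒳^ι` is exchangeable if it is invariant under all
coordinate permutations. -/
def Exchangeable {ι 𝒳 : Type*} (Q : (ι → 𝒳) → ℝ) : Prop :=
  ∀ σ : Equiv.Perm ι, ∀ x : ι → 𝒳, Q (x ∘ σ) = Q x

/-- The exchangeable weight `λ_ℰ(P)`: the supremum of `λ` such that `P ≥ λ·Q` pointwise
for some exchangeable probability measure `Q`. -/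
noncomputable def exchWeight {ι 𝒳 : Type*} [Fintype ι] [Fintype 𝒳]
    (P : (ι → 𝒳) → ℝ) : ℝ :=
  sSup {l : ℝ | ∃ Q : (ι → 𝒳) → ℝ, IsProb Q ∧ Exchangeable Q ∧ ∀ x, l * Q x ≤ P x}

/-- The permutation-equivalence class `[x]` of `x`, as a set. -/
def permSet {ι 𝒳 : Type*} (x : ι → 𝒳) : Set (ι → 𝒳) :=
  {y | ∃ σ : Equiv.Perm ι, y = x ∘ σ}

/-- The permutation-equivalence class `[x]` of `x`, as a finset. -/
noncomputable def permClass {ι 𝒳 : Type*} [Fintype ι] (x : ι → 𝒳) :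
    Finset (ι → 𝒳) :=
  Finset.univ.image (fun σ : Equiv.Perm ι => x ∘ σ)


section aux
variable {ι 𝒳 : Type*} [Fintype ι] [Fintype 𝒳]

lemma mem_permSet_self (x : ι → 𝒳) : x ∈ permSet x := ⟨Equiv.refl _, rfl⟩

lemma permSet_comp (x : ι → 𝒳) (σ : Equiv.Perm ι) :
    permSet (x ∘ σ) = permSet x := by
  ext y
  constructor
  · rintro ⟨τ, rfl⟩
    exact ⟨τ.trans σ, by ext i; simp [Function.comp]⟩
  · rintro ⟨τ, rfl⟩
    exact ⟨τ.trans σ.symm, by ext i; simp [Function.comp]⟩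

lemma img_ne (P : (ι → 𝒳) → ℝ) (x : ι → 𝒳) : (P '' permSet x).Nonempty :=
  ⟨P x, x, mem_permSet_self x, rfl⟩

lemma img_bdd (P : (ι → 𝒳) → ℝ) (x : ι → 𝒳) : BddBelow (P '' permSet x) :=
  ((Set.toFinite (permSet x)).image P).bddBelow

lemma m_nonneg (P : (ι → 𝒳) → ℝ) (hP : ∀ y, 0 ≤ P y) (x : ι → 𝒳) :
    0 ≤ sInf (P '' permSet x) :=
  le_csInf (img_ne P x) (by rintro p ⟨y, -, rfl⟩; exact hP y)

lemma m_le (P : (ι → 𝒳) → ℝ) {x y : ι → 𝒳} (h : y ∈ permSet x) :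
    sInf (P '' permSet x) ≤ P y :=
  csInf_le (img_bdd P x) ⟨y, h, rfl⟩

lemma m_exch (P : (ι → 𝒳) → ℝ) : Exchangeable (fun x => sInf (P '' permSet x)) := by
  intro σ x
  simp only [permSet_comp]

lemma lQ_le_m (P : (ι → 𝒳) → ℝ) {l : ℝ} {Q : (ι → 𝒳) → ℝ}
    (hex : Exchangeable Q) (hle : ∀ x, l * Q x ≤ P x) (x : ι → 𝒳) :
    l * Q x ≤ sInf (P '' permSet x) := by
  refine le_csInf (img_ne P x) ?_
  rintro p ⟨y, ⟨σ, rfl⟩, rfl⟩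
  have h := hle (x ∘ σ)
  rwa [hex σ x] at h

lemma isProb_congr {Ω : Type*} {i1 i2 : Fintype Ω} {P : Ω → ℝ}
    (h : @IsProb Ω i1 P) : @IsProb Ω i2 P := by
  cases Subsingleton.elim i1 i2
  exact h

lemma exchWeight_le_of (P : (ι → 𝒳) → ℝ) {M : ℝ} (hM : 0 ≤ M)
    (h : ∀ l : ℝ, (∃ Q : (ι → 𝒳) → ℝ, IsProb Q ∧ Exchangeable Q ∧ ∀ x, l * Q x ≤ P x) → l ≤ M) :
    exchWeight P ≤ M :=
  Real.sSup_le (fun l hl => h l hl) hM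

lemma le_exchWeight_of (P : (ι → 𝒳) → ℝ) {M : ℝ}
    (h : ∀ l : ℝ, (∃ Q : (ι → 𝒳) → ℝ, IsProb Q ∧ Exchangeable Q ∧ ∀ x, l * Q x ≤ P x) → l ≤ M)
    (hmem : ∃ Q : (ι → 𝒳) → ℝ, IsProb Q ∧ Exchangeable Q ∧ ∀ x, M * Q x ≤ P x) :
    M ≤ exchWeight P :=
  le_csSup ⟨M, fun l hl => h l hl⟩ hmem

end aux

lemma core {ι 𝒳 : Type*} [Fintype ι] [Fintype 𝒳] (P : (ι → 𝒳) → ℝ) (hP : IsProb P)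
    (hpos : 0 < exchWeight P) :
    (∃! Q : (ι → 𝒳) → ℝ,
        IsProb Q ∧ Exchangeable Q ∧ ∀ x, exchWeight P * Q x ≤ P x) ∧
    ∀ Q : (ι → 𝒳) → ℝ,
      (IsProb Q ∧ Exchangeable Q ∧ ∀ x, exchWeight P * Q x ≤ P x) →
      ∀ x, Q x = sInf (P '' permSet x) / exchWeight P := by

  set m : (ι → 𝒳) → ℝ := fun x => sInf (P '' permSet x) with hm
  set M : ℝ := ∑ x, m x with hM
  set L : ℝ := exchWeight P with hL
  have hmnn : ∀ x, 0 ≤ m x := fun x => m_nonneg P hP.1 x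
  have hMnn : 0 ≤ M := Finset.sum_nonneg fun x _ => hmnn x
  have hmleP : ∀ x, m x ≤ P x := fun x => m_le P (mem_permSet_self x)
  -- every element of the defining set is ≤ M
  have hub : ∀ l : ℝ, (∃ Q : (ι → 𝒳) → ℝ,
      IsProb Q ∧ Exchangeable Q ∧ ∀ x, l * Q x ≤ P x) → l ≤ M := by
    rintro l ⟨Q, hQp, hQe, hQle⟩
    have h1 : ∀ x, l * Q x ≤ m x := lQ_le_m P hQe hQle
    calc l = l * ∑ x, Q x := by rw [hQp.2, mul_one]
    _ = ∑ x, l * Q x := by rw [Finset.mul_sum]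
    _ ≤ ∑ x, m x := Finset.sum_le_sum fun x _ => h1 x
  have hLM : L ≤ M := exchWeight_le_of P hMnn hub
  have hMpos : 0 < M := lt_of_lt_of_le hpos hLM
  have hMne : M ≠ 0 := ne_of_gt hMpos
  -- M is in the set
  have hMmem : ∃ Q : (ι → 𝒳) → ℝ,
      IsProb Q ∧ Exchangeable Q ∧ ∀ x, M * Q x ≤ P x := by
    refine ⟨fun x => m x / M, ⟨fun x => div_nonneg (hmnn x) hMnn, ?_⟩, ?_, ?_⟩
    · rw [← Finset.sum_div, ← hM, div_self hMne]
    · intro σ x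
      simp only [hm]
      rw [permSet_comp]
    · intro x
      rw [mul_div_cancel₀ _ hMne]
      exact hmleP x
  have hML : M ≤ L := le_exchWeight_of P hub hMmem
  have hLM' : L = M := le_antisymm hLM hML
  have hLne : L ≠ 0 := ne_of_gt hpos
  -- the optimal Q
  set Q₀ : (ι → 𝒳) → ℝ := fun x => m x / L with hQ₀
  have hQ₀good : IsProb Q₀ ∧ Exchangeable Q₀ ∧ ∀ x, exchWeight P * Q₀ x ≤ P x := by
    refine ⟨⟨fun x => div_nonneg (hmnn x) hpos.le, ?_⟩, ?_, ?_⟩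
    · rw [← Finset.sum_div, ← hM, ← hLM', div_self hLne]
    · intro σ x
      simp only [hQ₀, hm]
      rw [permSet_comp]
    · intro x
      rw [← hL, hQ₀, mul_div_cancel₀ _ hLne]
      exact hmleP x
  -- any good Q equals Q₀
  have key : ∀ Q : (ι → 𝒳) → ℝ,
      (IsProb Q ∧ Exchangeable Q ∧ ∀ x, exchWeight P * Q x ≤ P x) →
      ∀ x, Q x = m x / L := by
    rintro Q ⟨hQp, hQe, hQle⟩
    have h1 : ∀ x, Q x ≤ m x / L := by
      intro x
      rw [le_div_iff₀ hpos, mul_comm]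
      exact lQ_le_m P hQe hQle x
    have hsum : ∑ x, Q x = ∑ x, m x / L := by
      rw [hQp.2, ← Finset.sum_div, ← hM, ← hLM', div_self hLne]
    have := (Finset.sum_eq_sum_iff_of_le (fun x _ => h1 x)).mp hsum
    intro x
    exact this x (Finset.mem_univ x)
  constructor
  · exact ⟨Q₀, hQ₀good, fun Q hQ => funext fun x => key Q hQ x⟩
  · intro Q hQ x
    exact key Q hQ x

/-- Theorem 3 (uniqueness): if `λ_ℰ(P) > 0`, exactly one exchangeable probability measure
`Q` satisfies `P ≥ λ_ℰ(P)·Q`, and it is given by `Q(x) = min_{y∈[x]} P(y) / λ_ℰ(P)`. -/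
theorem stmt7 {𝒳 : Type*} [Fintype 𝒳] (hk : 1 < Fintype.card 𝒳)
    {d : ℕ} (hd : 1 < d) (P : (Fin d → 𝒳) → ℝ) (hP : IsProb P)
    (hpos : 0 < exchWeight P) :
    (∃! Q : (Fin d → 𝒳) → ℝ,
        IsProb Q ∧ Exchangeable Q ∧ ∀ x, exchWeight P * Q x ≤ P x) ∧
    ∀ Q : (Fin d → 𝒳) → ℝ,
      (IsProb Q ∧ Exchangeable Q ∧ ∀ x, exchWeight P * Q x ≤ P x) →
      ∀ x, Q x = sInf (P '' permSet x) / exchWeight P := by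
  have h := core P (isProb_congr hP) hpos
  constructor
  · obtain ⟨⟨Q, hQ, huniq⟩, -⟩ := h
    exact ⟨Q, ⟨isProb_congr hQ.1, hQ.2.1, hQ.2.2⟩,
      fun R hR => huniq R ⟨isProb_congr hR.1, hR.2.1, hR.2.2⟩⟩
  · exact fun Q hQ x => h.2 Q ⟨isProb_congr hQ.1, hQ.2.1, hQ.2.2⟩ x
end

section
/- Let 𝒳 be a finite set of cardinality k > 1 and d > 1 finite. Let P be a probability measure on 𝒳^d with λ_ℰ(P) > 0, let I ⊆ {1,…,d} be non-empty, and suppose λ_ℰ(P) = λ_ℰ(P_I). If Q is the unique exchangeable probability measure on 𝒳^d with P ≥ λ_ℰ(P)·Q, then the unique exchangeable probability measure Q̃ on 𝒳^{|I|} with P_I ≥ λ_ℰ(P_I)·Q̃ equals the marginal Q_I; in particular, the exchangeable component of P_I is d-extendible. -/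
/-!
If `P ≥ λ • Q` with `Q` exchangeable, then `λ • Q ≤ m_P` pointwise, where `m_P x` is the minimum
of `P` over the permutation class of `x`. Summing gives `λ_ℰ(P) = ∑ x, m_P x`, attained by `m_P`
normalised, so every exchangeable component `Q` of `P` satisfies `λ_ℰ(P) • Q = m_P` and is unique.
The marginal `Q_I` is exchangeable and `P_I ≥ λ_ℰ(P) • Q_I = λ_ℰ(P_I) • Q_I`, so it is the
exchangeable component of `P_I`.
-/
open scoped BigOperators Classical

/-- The marginal distribution `P_I` of the coordinates indexed by `I`, a probability
measure on `𝒳^{|I|}` (with index type the elements of `I`). -/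
noncomputable def marginal {𝒳 : Type*} [Fintype 𝒳] {d : ℕ}
    (P : (Fin d → 𝒳) → ℝ) (I : Finset (Fin d)) : (({ i // i ∈ I }) → 𝒳) → ℝ :=
  fun y => ∑ x : Fin d → 𝒳, if (∀ i : { i // i ∈ I }, x i.1 = y i) then P x else 0

open Finset

section ExchangeableComponent

variable {ι 𝒳 : Type*} [Fintype ι]

lemma mem_permClass_self (x : ι → 𝒳) : x ∈ permClass x :=
  mem_image.2 ⟨1, mem_univ _, rfl⟩

lemma permClass_comp_perm (x : ι → 𝒳) (σ : Equiv.Perm ι) :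
    permClass (x ∘ σ) = permClass x := by
  ext y
  simp only [permClass, mem_image, mem_univ, true_and]
  constructor
  · rintro ⟨τ, rfl⟩
    exact ⟨σ * τ, rfl⟩
  · rintro ⟨τ, rfl⟩
    exact ⟨σ⁻¹ * τ, by ext; simp⟩

noncomputable def orbitMin (P : (ι → 𝒳) → ℝ) (x : ι → 𝒳) : ℝ :=
  (permClass x).inf' ⟨x, mem_permClass_self x⟩ P

lemma exchangeable_orbitMin (P : (ι → 𝒳) → ℝ) : Exchangeable (orbitMin P) := by
  intro σ x
  simp only [orbitMin, permClass_comp_perm]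

lemma orbitMin_le (P : (ι → 𝒳) → ℝ) (x : ι → 𝒳) : orbitMin P x ≤ P x :=
  inf'_le _ (mem_permClass_self x)

lemma orbitMin_nonneg {P : (ι → 𝒳) → ℝ} (hP : ∀ x, 0 ≤ P x) (x : ι → 𝒳) :
    0 ≤ orbitMin P x :=
  le_inf' _ _ fun y _ => hP y

lemma mul_le_orbitMin {P Q : (ι → 𝒳) → ℝ} {l : ℝ} (hQ : Exchangeable Q)
    (hle : ∀ x, l * Q x ≤ P x) (x : ι → 𝒳) : l * Q x ≤ orbitMin P x := by
  refine le_inf' _ _ fun y hy => ?_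
  obtain ⟨σ, -, rfl⟩ := mem_image.1 hy
  rw [← hQ σ x]
  exact hle _

variable [Fintype 𝒳]

lemma le_sum_orbitMin {P Q : (ι → 𝒳) → ℝ} {l : ℝ} (hQp : IsProb Q) (hQe : Exchangeable Q)
    (hle : ∀ x, l * Q x ≤ P x) : l ≤ ∑ x, orbitMin P x :=
  calc l = ∑ x, l * Q x := by rw [← mul_sum, hQp.2, mul_one]
    _ ≤ ∑ x, orbitMin P x := sum_le_sum fun x _ => mul_le_orbitMin hQe hle x

/-- The supremum defining `λ_ℰ(P)` is attained by the normalisation of `orbitMin P`. -/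
theorem exchWeight_eq_sum_orbitMin {P : (ι → 𝒳) → ℝ} (hP : ∀ x, 0 ≤ P x)
    (hpos : 0 < exchWeight P) : exchWeight P = ∑ x, orbitMin P x := by
  set S := ∑ x, orbitMin P x
  have hbdd : ∀ l ∈ {l : ℝ | ∃ Q : (ι → 𝒳) → ℝ, IsProb Q ∧ Exchangeable Q ∧
      ∀ x, l * Q x ≤ P x}, l ≤ S := by
    rintro l ⟨Q, hQp, hQe, hle⟩
    exact le_sum_orbitMin hQp hQe hle
  have hS : 0 < S :=
    hpos.trans_le (Real.sSup_le hbdd (sum_nonneg fun x _ => orbitMin_nonneg hP x))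
  refine le_antisymm (Real.sSup_le hbdd hS.le) (le_csSup ⟨S, hbdd⟩ ⟨fun x => orbitMin P x / S,
    ⟨fun x => div_nonneg (orbitMin_nonneg hP x) hS.le, ?_⟩, ?_, fun x => ?_⟩)
  · rw [← sum_div, div_self hS.ne']
  · intro σ x
    simp only [exchangeable_orbitMin P σ x]
  · rw [mul_div_cancel₀ _ hS.ne']
    exact orbitMin_le P x

-- The `DecidableEq ι` binder makes `IsProb Q` use the same `Fintype (ι → 𝒳)` instance as at
-- concrete index types such as `Fin d`, rather than the classical one inside `exchWeight`.
def IsExchComponent [DecidableEq ι] (P Q : (ι → 𝒳) → ℝ) : Prop :=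
  IsProb Q ∧ Exchangeable Q ∧ ∀ x, exchWeight P * Q x ≤ P x

variable [DecidableEq ι] {P Q : (ι → 𝒳) → ℝ}

theorem IsExchComponent.eq_orbitMin_div (hP : ∀ x, 0 ≤ P x) (hpos : 0 < exchWeight P)
    (hQ : IsExchComponent P Q) : Q = fun x => orbitMin P x / exchWeight P := by
  obtain ⟨hQp, hQe, hle⟩ := hQ
  have hW : exchWeight P = ∑ x, orbitMin P x := by
    convert exchWeight_eq_sum_orbitMin hP hpos
  have hgap : ∀ x ∈ univ, 0 ≤ orbitMin P x - exchWeight P * Q x :=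
    fun x _ => sub_nonneg.2 (mul_le_orbitMin hQe hle x)
  have hsum : ∑ x, (orbitMin P x - exchWeight P * Q x) = 0 := by
    rw [sum_sub_distrib, ← mul_sum, hQp.2, mul_one, ← hW, sub_self]
  funext x
  have hx := (sum_eq_zero_iff_of_nonneg hgap).1 hsum x (mem_univ x)
  rw [eq_div_iff hpos.ne']
  linarith

theorem IsExchComponent.unique {Q' : (ι → 𝒳) → ℝ} (hP : ∀ x, 0 ≤ P x)
    (hpos : 0 < exchWeight P) (hQ : IsExchComponent P Q) (hQ' : IsExchComponent P Q') :
    Q = Q' :=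
  (hQ.eq_orbitMin_div hP hpos).trans (hQ'.eq_orbitMin_div hP hpos).symm

end ExchangeableComponent

section Marginal

variable {𝒳 : Type*} [Fintype 𝒳] {d : ℕ} {P Q : (Fin d → 𝒳) → ℝ} (I : Finset (Fin d))

lemma sum_marginal : ∑ y, marginal P I y = ∑ x, P x := by
  unfold marginal
  rw [sum_comm]
  refine sum_congr rfl fun x _ => ?_
  simp [← funext_iff]

lemma IsProb.marginal (hP : IsProb P) : IsProb (marginal P I) :=
  ⟨fun y => sum_nonneg fun x _ => by split_ifs <;> simp [hP.1 x],
    by rw [sum_marginal, hP.2]⟩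

lemma mul_marginal_le_marginal {c : ℝ} (h : ∀ x, c * Q x ≤ P x) (y : I → 𝒳) :
    c * marginal Q I y ≤ marginal P I y := by
  unfold marginal
  rw [mul_sum]
  exact sum_le_sum fun x _ => by split_ifs <;> simp [h x]

lemma Exchangeable.marginal (hQ : Exchangeable Q) : Exchangeable (marginal Q I) := by
  intro σ y
  set τ := Equiv.Perm.ofSubtype σ
  let e : (Fin d → 𝒳) ≃ (Fin d → 𝒳) := Equiv.arrowCongr τ.symm (Equiv.refl 𝒳)
  have he : ∀ x, e x = x ∘ τ := fun x => by ext; simp [e]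
  unfold _root_.marginal
  rw [← e.sum_comp]
  refine sum_congr rfl fun x _ => ?_
  rw [he, hQ τ x]
  congr 1
  simp only [Function.comp_apply, τ, Equiv.Perm.ofSubtype_apply_coe]
  exact propext (σ.forall_congr fun {i} => Iff.rfl)

theorem IsExchComponent.marginal (hQ : IsExchComponent P Q)
    (heq : exchWeight P = exchWeight (marginal P I)) :
    IsExchComponent (marginal P I) (marginal Q I) :=
  ⟨hQ.1.marginal I, hQ.2.1.marginal I, heq ▸ mul_marginal_le_marginal I hQ.2.2⟩

end Marginal

theorem stmt10_general {𝒳 : Type*} [Fintype 𝒳]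
    {d : ℕ} (P : (Fin d → 𝒳) → ℝ) (hP : IsProb P)
    (hpos : 0 < exchWeight P)
    (I : Finset (Fin d))
    (heq : exchWeight P = exchWeight (marginal P I))
    (Q : (Fin d → 𝒳) → ℝ)
    (hQ : IsProb Q ∧ Exchangeable Q ∧ ∀ x, exchWeight P * Q x ≤ P x)
    (Qt : (({ i // i ∈ I }) → 𝒳) → ℝ)
    (hQt : IsProb Qt ∧ Exchangeable Qt ∧
      ∀ y, exchWeight (marginal P I) * Qt y ≤ marginal P I y) :
    Qt = marginal Q I ∧
    ∃ ν : (Fin d → 𝒳) → ℝ, IsProb ν ∧ Exchangeable ν ∧ Qt = marginal ν I := by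
  have hQI : IsExchComponent (marginal P I) (marginal Q I) :=
    IsExchComponent.marginal I hQ heq
  have hQt_eq : Qt = marginal Q I :=
    IsExchComponent.unique (hP.marginal I).1 (heq ▸ hpos) hQt hQI
  exact ⟨hQt_eq, Q, hQ.1, hQ.2.1, hQt_eq⟩

/-- Corollary: if `λ_ℰ(P) = λ_ℰ(P_I) > 0`, then the exchangeable component of `P_I`
equals the marginal `Q_I` of the exchangeable component `Q` of `P`; in particular it is
`d`-extendible (it is the `I`-marginal of an exchangeable probability measure on `𝒳^d`). -/
theorem stmt10 {𝒳 : Type*} [Fintype 𝒳] (hk : 1 < Fintype.card 𝒳)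
    {d : ℕ} (hd : 1 < d) (P : (Fin d → 𝒳) → ℝ) (hP : IsProb P)
    (hpos : 0 < exchWeight P)
    (I : Finset (Fin d)) (hI : I.Nonempty)
    (heq : exchWeight P = exchWeight (marginal P I))
    (Q : (Fin d → 𝒳) → ℝ)
    (hQ : IsProb Q ∧ Exchangeable Q ∧ ∀ x, exchWeight P * Q x ≤ P x)
    (Qt : (({ i // i ∈ I }) → 𝒳) → ℝ)
    (hQt : IsProb Qt ∧ Exchangeable Qt ∧
      ∀ y, exchWeight (marginal P I) * Qt y ≤ marginal P I y) :
    Qt = marginal Q I ∧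
    ∃ ν : (Fin d → 𝒳) → ℝ, IsProb ν ∧ Exchangeable ν ∧ Qt = marginal ν I :=
  stmt10_general P hP hpos I heq Q hQ Qt hQt
end
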